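/- arXiv:1312.7068 — 6 statements merged into one kernel-verified Lean document; each statement's English description precedes it below -/
import Mathlib

section
/- Let N ≥ 1 and let σ, τ ∈ (N, ∞) be real numbers, and set μ = min{σ, τ}. Then the supremum over y ∈ ℝ^N of |y|^μ · ∫_{ℝ^N} (1+|x|)^{-σ} (1+|x−y|)^{-τ} dx is finite. -/
/-!
By the triangle inequality every `x` satisfies `‖x‖ ≥ ‖y‖/2` or `‖x - y‖ ≥ ‖y‖/2`, so one of the
two factors of the integrand is at most `(1 + ‖y‖/2)^(-min σ τ)`. Hence the integrand is bounded
by `(1 + ‖y‖/2)^(-min σ τ)` times the sum of the two factors, whose integrals do not depend on `y`,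
and `‖y‖^(min σ τ) (1 + ‖y‖/2)^(-min σ τ) ≤ 2^(min σ τ)`.
-/

open Real MeasureTheory

lemma mul_le_mul_add_of_min_le {p q m : ℝ} (hp : 0 ≤ p) (hq : 0 ≤ q) (h : min p q ≤ m) :
    p * q ≤ m * (p + q) := by
  rcases le_total p q with hpq | hqp
  · rw [min_eq_left hpq] at h
    nlinarith
  · rw [min_eq_right hqp] at h
    nlinarith

lemma one_add_rpow_neg_le_one_add_rpow_neg {a b κ σ : ℝ} (ha : 0 ≤ a) (hab : a ≤ b)
    (hκ : 0 ≤ κ) (hκσ : κ ≤ σ) : (1 + b) ^ (-σ) ≤ (1 + a) ^ (-κ) :=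
  calc (1 + b) ^ (-σ) ≤ (1 + b) ^ (-κ) :=
        rpow_le_rpow_of_exponent_le (by linarith) (neg_le_neg hκσ)
    _ ≤ (1 + a) ^ (-κ) := rpow_le_rpow_of_nonpos (by linarith) (by linarith) (by linarith)

lemma rpow_mul_one_add_half_rpow_neg_le {t κ : ℝ} (ht : 0 ≤ t) (hκ : 0 ≤ κ) :
    t ^ κ * (1 + t / 2) ^ (-κ) ≤ 2 ^ κ := by
  have h0 : 0 < 1 + t / 2 := by positivity
  rw [rpow_neg h0.le, ← div_eq_mul_inv, ← div_rpow ht h0.le]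
  refine rpow_le_rpow (by positivity) ?_ hκ
  rw [div_le_iff₀ h0]
  linarith

section

variable {E : Type*}

lemma one_add_norm_rpow_neg_mul_le [SeminormedAddGroup E] (x y : E) {σ τ : ℝ}
    (hσ : 0 ≤ σ) (hτ : 0 ≤ τ) :
    (1 + ‖x‖) ^ (-σ) * (1 + ‖x - y‖) ^ (-τ) ≤
      (1 + ‖y‖ / 2) ^ (-min σ τ) * ((1 + ‖x‖) ^ (-σ) + (1 + ‖x - y‖) ^ (-τ)) := by
  have hκ : 0 ≤ min σ τ := le_min hσ hτ
  refine mul_le_mul_add_of_min_le (by positivity) (by positivity) ?_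
  rcases le_total (‖y‖ / 2) ‖x‖ with hx | hx
  · exact min_le_of_left_le <|
      one_add_rpow_neg_le_one_add_rpow_neg (by positivity) hx hκ (min_le_left _ _)
  · have hxy : ‖y‖ / 2 ≤ ‖x - y‖ := by linarith [norm_le_norm_add_norm_sub x y]
    exact min_le_of_right_le <|
      one_add_rpow_neg_le_one_add_rpow_neg (by positivity) hxy hκ (min_le_right _ _)

variable [NormedAddCommGroup E] [NormedSpace ℝ E] [FiniteDimensional ℝ E]
  [MeasurableSpace E] [BorelSpace E] (μ : Measure E) [μ.IsAddHaarMeasure]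

lemma integral_one_add_norm_rpow_neg_mul_sub_le (y : E) {σ τ : ℝ}
    (hσ : (Module.finrank ℝ E : ℝ) < σ) (hτ : (Module.finrank ℝ E : ℝ) < τ) :
    ∫ x, (1 + ‖x‖) ^ (-σ) * (1 + ‖x - y‖) ^ (-τ) ∂μ ≤
      (1 + ‖y‖ / 2) ^ (-min σ τ) *
        ((∫ x, (1 + ‖x‖) ^ (-σ) ∂μ) + ∫ x, (1 + ‖x‖) ^ (-τ) ∂μ) := by
  have hd : (0 : ℝ) ≤ Module.finrank ℝ E := Nat.cast_nonneg _
  have hIσ : Integrable (fun x : E => (1 + ‖x‖) ^ (-σ)) μ := integrable_one_add_norm hσ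
  have hIτ : Integrable (fun x : E => (1 + ‖x - y‖) ^ (-τ)) μ :=
    (integrable_one_add_norm hτ).comp_sub_right y
  calc ∫ x, (1 + ‖x‖) ^ (-σ) * (1 + ‖x - y‖) ^ (-τ) ∂μ
      ≤ ∫ x, (1 + ‖y‖ / 2) ^ (-min σ τ) * ((1 + ‖x‖) ^ (-σ) + (1 + ‖x - y‖) ^ (-τ)) ∂μ :=
        integral_mono_of_nonneg (.of_forall fun x => by positivity)
          ((hIσ.add hIτ).const_mul _)
          (.of_forall fun x => one_add_norm_rpow_neg_mul_le x y (by linarith) (by linarith))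
    _ = _ := by
        rw [integral_const_mul, integral_add hIσ hIτ,
          integral_sub_right_eq_self (fun x : E => (1 + ‖x‖) ^ (-τ)) y]

end

theorem stmt0_general (N : ℕ) (σ τ : ℝ) (hσ : (N : ℝ) < σ) (hτ : (N : ℝ) < τ) :
    ∃ C : ℝ, ∀ y : EuclideanSpace ℝ (Fin N),
      ‖y‖ ^ (min σ τ) *
        ∫ x : EuclideanSpace ℝ (Fin N), (1 + ‖x‖) ^ (-σ) * (1 + ‖x - y‖) ^ (-τ) ≤ C := by
  have hN0 : (0 : ℝ) ≤ N := N.cast_nonneg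
  have hκ : 0 ≤ min σ τ := le_min (by linarith) (by linarith)
  rw [← finrank_euclideanSpace_fin (𝕜 := ℝ) (n := N)] at hσ hτ
  set S := (∫ x : EuclideanSpace ℝ (Fin N), (1 + ‖x‖) ^ (-σ)) +
    ∫ x : EuclideanSpace ℝ (Fin N), (1 + ‖x‖) ^ (-τ)
  have hS : 0 ≤ S := by positivity
  refine ⟨2 ^ min σ τ * S, fun y => ?_⟩
  calc ‖y‖ ^ min σ τ * ∫ x, (1 + ‖x‖) ^ (-σ) * (1 + ‖x - y‖) ^ (-τ)
      ≤ ‖y‖ ^ min σ τ * ((1 + ‖y‖ / 2) ^ (-min σ τ) * S) := by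
        gcongr
        exact integral_one_add_norm_rpow_neg_mul_sub_le volume y hσ hτ
    _ = ‖y‖ ^ min σ τ * (1 + ‖y‖ / 2) ^ (-min σ τ) * S := by ring
    _ ≤ 2 ^ min σ τ * S := by
        gcongr
        exact rpow_mul_one_add_half_rpow_neg_le (norm_nonneg y) hκ

theorem stmt0 (N : ℕ) (hN : 1 ≤ N) (σ τ : ℝ) (hσ : (N : ℝ) < σ) (hτ : (N : ℝ) < τ) :
    ∃ C : ℝ, ∀ y : EuclideanSpace ℝ (Fin N),
      ‖y‖ ^ (min σ τ) *
        ∫ x : EuclideanSpace ℝ (Fin N), (1 + ‖x‖) ^ (-σ) * (1 + ‖x - y‖) ^ (-τ) ≤ C :=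
  stmt0_general N σ τ hσ hτ
end

section
/- For every p > 2 there exists a constant C = C(p) > 0 such that for all a, b ≥ 0, (a+b)^p ≥ a^p + b^p + p(a^{p-1} b + a b^{p-1}) − C a^{p/2} b^{p/2}. -/
open Real

/-! Assume `a ≤ b`. Bernoulli's inequality gives `(a + b)^p ≥ b^p + p a b^(p-1)`, and each of the two
remaining terms `a^p`, `p a^(p-1) b` is at most a multiple of `a^(p/2) b^(p/2)`, because for `p ≥ 2`
they arise from `a^(p/2) b^(p/2)` by moving a nonnegative part of the exponent of `b` onto the
smaller base `a`. Hence `C = p + 1` works. -/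

lemma rpow_add_mul_rpow_le_rpow_mul_rpow_add {a b x y d : ℝ} (ha : 0 ≤ a) (hab : a ≤ b)
    (hx : 0 ≤ x) (hy : 0 ≤ y) (hd : 0 ≤ d) :
    a ^ (x + d) * b ^ y ≤ a ^ x * b ^ (y + d) := by
  have hb : 0 ≤ b := ha.trans hab
  rw [rpow_add_of_nonneg ha hx hd, rpow_add_of_nonneg hb hy hd, mul_right_comm, mul_assoc]
  gcongr

lemma rpow_add_mul_mul_rpow_sub_one_le_add_rpow {p a b : ℝ} (hp : 1 < p) (ha : 0 ≤ a)
    (hb : 0 ≤ b) : b ^ p + p * (a * b ^ (p - 1)) ≤ (a + b) ^ p := by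
  rcases hb.eq_or_lt with rfl | hb
  · simp [zero_rpow (by linarith : p ≠ 0), zero_rpow (by linarith : p - 1 ≠ 0)]
    positivity
  have bernoulli := one_add_mul_self_le_rpow_one_add
    (by linarith [div_nonneg ha hb.le] : (-1 : ℝ) ≤ a / b) hp.le
  rw [one_add_div hb.ne', div_rpow (by positivity) hb.le,
    le_div_iff₀ (rpow_pos_of_pos hb p)] at bernoulli
  calc b ^ p + p * (a * b ^ (p - 1)) = (1 + p * (a / b)) * b ^ p := by
        rw [rpow_sub_one hb.ne']; field_simp
    _ ≤ (a + b) ^ p := by rwa [add_comm a b]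

lemma sub_mul_rpow_half_le_add_rpow_of_le {p a b : ℝ} (hp : 2 ≤ p) (ha : 0 ≤ a) (hab : a ≤ b) :
    a ^ p + b ^ p + p * (a ^ (p - 1) * b + a * b ^ (p - 1)) - (p + 1) * a ^ (p / 2) * b ^ (p / 2)
      ≤ (a + b) ^ p := by
  have hb : 0 ≤ b := ha.trans hab
  have bernoulli := rpow_add_mul_mul_rpow_sub_one_le_add_rpow (by linarith) ha hb (p := p)
  have pow_le : a ^ p ≤ a ^ (p / 2) * b ^ (p / 2) := by
    simpa using rpow_add_mul_rpow_le_rpow_mul_rpow_add ha hab (x := p / 2) (y := 0) (d := p / 2)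
      (by linarith) le_rfl (by linarith)
  have pow_sub_one_le : a ^ (p - 1) * b ≤ a ^ (p / 2) * b ^ (p / 2) := by
    have h := rpow_add_mul_rpow_le_rpow_mul_rpow_add ha hab (x := p / 2) (y := 1) (d := p / 2 - 1)
      (by linarith) zero_le_one (by linarith)
    rwa [show p / 2 + (p / 2 - 1) = p - 1 by ring, show 1 + (p / 2 - 1) = p / 2 by ring,
      rpow_one] at h
  linarith [mul_le_mul_of_nonneg_left pow_sub_one_le (by linarith : (0 : ℝ) ≤ p)]

lemma sub_mul_rpow_half_le_add_rpow {p a b : ℝ} (hp : 2 ≤ p) (ha : 0 ≤ a) (hb : 0 ≤ b) :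
    a ^ p + b ^ p + p * (a ^ (p - 1) * b + a * b ^ (p - 1)) - (p + 1) * a ^ (p / 2) * b ^ (p / 2)
      ≤ (a + b) ^ p := by
  rcases le_total a b with hab | hba
  · exact sub_mul_rpow_half_le_add_rpow_of_le hp ha hab
  · have h := sub_mul_rpow_half_le_add_rpow_of_le hp hb hba
    rw [add_comm b a] at h
    linarith

theorem stmt1 (p : ℝ) (hp : 2 < p) :
    ∃ C > 0, ∀ a b : ℝ, 0 ≤ a → 0 ≤ b →
      a ^ p + b ^ p + p * (a ^ (p - 1) * b + a * b ^ (p - 1)) - C * a ^ (p / 2) * b ^ (p / 2)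
        ≤ (a + b) ^ p :=
  ⟨p + 1, by linarith, fun _ _ ha hb => sub_mul_rpow_half_le_add_rpow hp.le ha hb⟩
end

section
/- Suppose u : ℝ^N → ℝ satisfies C₁/(1+|x|^{N+2s}) ≤ u(x) ≤ C₂/(1+|x|^{N+2s}) for all x, with constants 0 < C₁ < C₂ and 0 < s < 1. Let p > 2 and for y, z ∈ ℝ^N define A_{y,z} = ∫_{ℝ^N} u(x−y)^{p-1} u(x−z) dx. Then there exist constants ζ₁, ζ₂ > 0 such that ζ₁ |z−y|^{-(N+2s)} ≤ A_{y,z} ≤ ζ₂ |z−y|^{-(N+2s)} for all y, z with |z−y| > 1. -/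
/-! Write `r = N + 2s`; then `u` is comparable to `(1 + ‖x‖ ^ r)⁻¹`, which is integrable since
`r > N`. Upper bound: every `x` lies at distance at least `‖z - y‖ / 2` from `y` or from `z`, so
one factor of the integrand is `O(‖z - y‖ ^ (-r))` while the other integrates to a constant
(`u ^ (p - 1)` decays at least as fast as `u` because `p - 1 ≥ 1`). Lower bound: on the unit
ball around `y`, the factor `u (x - y) ^ (p - 1)` is at least `(C₁ / 2) ^ (p - 1)`, and
`‖x - z‖ ≤ 2 ‖z - y‖` gives `u (x - z) ≳ ‖z - y‖ ^ (-r)`. -/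

open Real MeasureTheory Metric Module

lemma one_add_rpow_le_two_rpow_mul {a r : ℝ} (ha : 0 ≤ a) (hr : 0 ≤ r) :
    (1 + a) ^ r ≤ 2 ^ r * (1 + a ^ r) := by
  rcases le_total a 1 with h | h
  · calc (1 + a) ^ r ≤ 2 ^ r := rpow_le_rpow (by positivity) (by linarith) hr
      _ ≤ 2 ^ r * (1 + a ^ r) :=
        le_mul_of_one_le_right (by positivity) (le_add_of_nonneg_right (by positivity))
  · calc (1 + a) ^ r ≤ (2 * a) ^ r := rpow_le_rpow (by positivity) (by linarith) hr
      _ = 2 ^ r * a ^ r := mul_rpow zero_le_two ha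
      _ ≤ 2 ^ r * (1 + a ^ r) := by gcongr; linarith

lemma div_one_add_rpow_le_of_half_le {C r R a : ℝ} (hC : 0 ≤ C) (hr : 0 ≤ r) (hR : 0 < R)
    (ha : R / 2 ≤ a) : C / (1 + a ^ r) ≤ C * 2 ^ r * R ^ (-r) := by
  have hRa : (R / 2) ^ r ≤ 1 + a ^ r := by
    linarith [rpow_le_rpow (by positivity) ha hr]
  calc C / (1 + a ^ r) ≤ C / (R / 2) ^ r := by gcongr
    _ = C * 2 ^ r * R ^ (-r) := by
      rw [div_rpow hR.le zero_le_two, rpow_neg hR.le]; field_simp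

lemma div_two_rpow_mul_rpow_neg_le_div_one_add_rpow {C r R a : ℝ} (hC : 0 ≤ C) (hr : 0 ≤ r)
    (hR : 1 ≤ R) (ha0 : 0 ≤ a) (ha : a ≤ 2 * R) :
    C / 2 ^ (r + 1) * R ^ (-r) ≤ C / (1 + a ^ r) := by
  have h1 : 1 ≤ (2 * R) ^ r := one_le_rpow (by linarith) hr
  have h2 : a ^ r ≤ (2 * R) ^ r := rpow_le_rpow ha0 ha hr
  have hR0 : 0 < R := by linarith
  calc C / 2 ^ (r + 1) * R ^ (-r) = C / (2 * (2 * R) ^ r) := by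
        rw [rpow_add two_pos, rpow_one, mul_rpow zero_le_two hR0.le, rpow_neg hR0.le]
        field_simp
    _ ≤ C / (1 + a ^ r) := by gcongr; linarith

lemma half_le_div_one_add_rpow {C r a : ℝ} (hC : 0 ≤ C) (hr : 0 ≤ r) (ha0 : 0 ≤ a)
    (ha : a ≤ 1) : C / 2 ≤ C / (1 + a ^ r) := by
  have := rpow_le_one ha0 ha hr
  gcongr
  linarith

lemma nonneg_of_le_div_one_add {a b C : ℝ} (ha : 0 ≤ a) (hb : 0 ≤ b) (h : a ≤ C / (1 + b)) :
    0 ≤ C := by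
  have := ha.trans h
  rwa [le_div_iff₀ (by positivity), zero_mul] at this

lemma rpow_le_div_one_add_of_le_div {a b C q : ℝ} (ha : 0 ≤ a) (hb : 0 ≤ b) (hq : 1 ≤ q)
    (h : a ≤ C / (1 + b)) : a ^ q ≤ C ^ q / (1 + b) := by
  have hC : 0 ≤ C := nonneg_of_le_div_one_add ha hb h
  calc a ^ q ≤ (C / (1 + b)) ^ q := rpow_le_rpow ha h (by linarith)
    _ = C ^ q / (1 + b) ^ q := div_rpow hC (by positivity) q
    _ ≤ C ^ q / (1 + b) := by gcongr; exact self_le_rpow_of_one_le (by linarith) hq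

section RightInvariant

variable {G : Type*} [NormedAddCommGroup G] [MeasurableSpace G] [MeasurableAdd G]
  {μ : Measure G} [μ.IsAddRightInvariant]

theorem integral_comp_sub_mul_comp_sub_le {f g : G → ℝ} {r C D : ℝ} (hr : 0 ≤ r)
    (hf : Integrable f μ) (hg : Integrable g μ) (hf0 : ∀ x, 0 ≤ f x) (hg0 : ∀ x, 0 ≤ g x)
    (hfC : ∀ x, f x ≤ C / (1 + ‖x‖ ^ r)) (hgD : ∀ x, g x ≤ D / (1 + ‖x‖ ^ r)) {y z : G}
    (hyz : y ≠ z) :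
    ∫ x, f (x - y) * g (x - z) ∂μ ≤
      2 ^ r * (D * ∫ x, f x ∂μ + C * ∫ x, g x ∂μ) * ‖z - y‖ ^ (-r) := by
  set R := ‖z - y‖
  have hR : 0 < R := norm_pos_iff.2 (sub_ne_zero.2 hyz.symm)
  have hC : 0 ≤ C := nonneg_of_le_div_one_add (hf0 0) (by positivity) (hfC 0)
  have hD : 0 ≤ D := nonneg_of_le_div_one_add (hg0 0) (by positivity) (hgD 0)
  have hK : 0 ≤ 2 ^ r * R ^ (-r) := by positivity
  -- `x` cannot be close to both `y` and `z`, and `f`, resp. `g`, is small far from the origin.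
  have hpt : ∀ x, f (x - y) * g (x - z) ≤
      2 ^ r * R ^ (-r) * (D * f (x - y) + C * g (x - z)) := by
    intro x
    have htri : R ≤ ‖x - y‖ + ‖x - z‖ := by
      linarith [norm_sub_le_norm_sub_add_norm_sub z x y, norm_sub_rev z x]
    rcases le_total (R / 2) ‖x - z‖ with h | h
    · have := (hgD _).trans (div_one_add_rpow_le_of_half_le hD hr hR h)
      linarith [mul_le_mul_of_nonneg_left this (hf0 (x - y)),
        mul_nonneg hK (mul_nonneg hC (hg0 (x - z)))]
    · have := (hfC (x - y)).trans (div_one_add_rpow_le_of_half_le hC hr hR (by linarith))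
      linarith [mul_le_mul_of_nonneg_right this (hg0 (x - z)),
        mul_nonneg hK (mul_nonneg hD (hf0 (x - y)))]
  calc ∫ x, f (x - y) * g (x - z) ∂μ
      ≤ ∫ x, 2 ^ r * R ^ (-r) * (D * f (x - y) + C * g (x - z)) ∂μ :=
        integral_mono_of_nonneg (.of_forall fun x => mul_nonneg (hf0 _) (hg0 _))
          ((((hf.comp_sub_right y).const_mul D).add
            ((hg.comp_sub_right z).const_mul C)).const_mul _) (.of_forall hpt)
    _ = 2 ^ r * (D * ∫ x, f x ∂μ + C * ∫ x, g x ∂μ) * R ^ (-r) := by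
      rw [integral_const_mul, integral_add ((hf.comp_sub_right y).const_mul D)
        ((hg.comp_sub_right z).const_mul C), integral_const_mul, integral_const_mul,
        integral_sub_right_eq_self f y, integral_sub_right_eq_self g z]
      ring

end RightInvariant

section AddHaar

variable {E : Type*} [NormedAddCommGroup E] [NormedSpace ℝ E] [FiniteDimensional ℝ E]
  [MeasurableSpace E] [BorelSpace E] {μ : Measure E} [μ.IsAddHaarMeasure]

lemma integrable_inv_one_add_norm_rpow {r : ℝ} (hr : (finrank ℝ E : ℝ) < r) :
    Integrable (fun x : E => (1 + ‖x‖ ^ r)⁻¹) μ := by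
  have hr0 : 0 ≤ r := (Nat.cast_nonneg _).trans hr.le
  refine ((integrable_one_add_norm hr).const_mul (2 ^ r)).mono' (by fun_prop)
    (.of_forall fun x => ?_)
  have hx := norm_nonneg x
  rw [norm_inv, norm_of_nonneg (by positivity), rpow_neg (by positivity), ← div_eq_mul_inv,
    le_div_iff₀ (by positivity), ← div_eq_inv_mul, div_le_iff₀ (by positivity)]
  exact one_add_rpow_le_two_rpow_mul hx hr0

lemma integrable_of_le_div_one_add_norm_rpow {u : E → ℝ} {C r : ℝ}
    (hr : (finrank ℝ E : ℝ) < r) (hu : AEStronglyMeasurable u μ) (hu0 : ∀ x, 0 ≤ u x)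
    (huC : ∀ x, u x ≤ C / (1 + ‖x‖ ^ r)) : Integrable u μ :=
  ((integrable_inv_one_add_norm_rpow hr).const_mul C).mono' hu <| .of_forall fun x => by
    rw [norm_of_nonneg (hu0 x), ← div_eq_mul_inv]; exact huC x

lemma mul_measureReal_ball_le_integral {f : E → ℝ} {c ρ : ℝ} {y : E} (hf : Integrable f μ)
    (hf0 : ∀ x, 0 ≤ f x) (hc : ∀ x ∈ ball y ρ, c ≤ f x) :
    c * μ.real (ball 0 ρ) ≤ ∫ x, f x ∂μ := by
  rw [measureReal_def, ← μ.addHaar_ball_center y, ← measureReal_def]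
  calc c * μ.real (ball y ρ) ≤ ∫ x in ball y ρ, f x ∂μ :=
        setIntegral_ge_of_const_le_real measurableSet_ball measure_ball_lt_top.ne hc
          hf.integrableOn
    _ ≤ ∫ x, f x ∂μ := setIntegral_le_integral hf (.of_forall hf0)

theorem le_integral_rpow_comp_sub_mul_comp_sub {u : E → ℝ} {r C q : ℝ}
    (hr : 0 ≤ r) (hq : 0 ≤ q) (hC : 0 ≤ C) (hu : ∀ x, C / (1 + ‖x‖ ^ r) ≤ u x) {y z : E}
    (hint : Integrable (fun x => u (x - y) ^ q * u (x - z)) μ) (hyz : 1 ≤ ‖z - y‖) :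
    (C / 2) ^ q * (C / 2 ^ (r + 1)) * μ.real (ball 0 1) * ‖z - y‖ ^ (-r) ≤
      ∫ x, u (x - y) ^ q * u (x - z) ∂μ := by
  have hu0 : ∀ x, 0 ≤ u x := fun x => (div_nonneg hC (by positivity)).trans (hu x)
  rw [mul_right_comm]
  refine mul_measureReal_ball_le_integral (y := y) hint
    (fun x => mul_nonneg (rpow_nonneg (hu0 _) _) (hu0 _)) fun x hx => ?_
  rw [mem_ball_iff_norm] at hx
  have hxz : ‖x - z‖ ≤ 2 * ‖z - y‖ := by
    linarith [norm_sub_le_norm_sub_add_norm_sub x y z, norm_sub_rev y z]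
  rw [mul_assoc]
  gcongr
  · exact rpow_nonneg (hu0 _) _
  · exact (half_le_div_one_add_rpow hC hr (norm_nonneg _) hx.le).trans (hu _)
  · exact (div_two_rpow_mul_rpow_neg_le_div_one_add_rpow hC hr hyz (norm_nonneg _) hxz).trans
      (hu _)

lemma half_mul_measureReal_ball_le_integral {u : E → ℝ} {r C : ℝ} (hr : 0 ≤ r) (hC : 0 ≤ C)
    (hu : ∀ x, C / (1 + ‖x‖ ^ r) ≤ u x) (hint : Integrable u μ) :
    C / 2 * μ.real (ball 0 1) ≤ ∫ x, u x ∂μ :=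
  mul_measureReal_ball_le_integral hint (fun x => (div_nonneg hC (by positivity)).trans (hu x))
    fun x hx => (half_le_div_one_add_rpow hC hr (norm_nonneg x)
      (by simpa using (mem_ball_zero_iff.1 hx).le)).trans (hu x)

end AddHaar

theorem stmt3_general (N : ℕ) (s p C₁ C₂ : ℝ) (hs0 : 0 < s)
    (hp : 2 < p) (hC1 : 0 < C₁)
    (u : EuclideanSpace ℝ (Fin N) → ℝ) (hmeas : Measurable u)
    (hlow : ∀ x, C₁ / (1 + ‖x‖ ^ ((N : ℝ) + 2 * s)) ≤ u x)
    (hupp : ∀ x, u x ≤ C₂ / (1 + ‖x‖ ^ ((N : ℝ) + 2 * s))) :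
    ∃ ζ₁ > (0 : ℝ), ∃ ζ₂ > (0 : ℝ), ∀ y z : EuclideanSpace ℝ (Fin N), 1 < ‖z - y‖ →
      ζ₁ * ‖z - y‖ ^ (-((N : ℝ) + 2 * s)) ≤ (∫ x, u (x - y) ^ (p - 1) * u (x - z)) ∧
      (∫ x, u (x - y) ^ (p - 1) * u (x - z)) ≤ ζ₂ * ‖z - y‖ ^ (-((N : ℝ) + 2 * s)) := by
  set r := (N : ℝ) + 2 * s
  have hr : (finrank ℝ (EuclideanSpace ℝ (Fin N)) : ℝ) < r := by simp [r]; linarith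
  have hr0 : 0 ≤ r := by positivity
  have hu0 : ∀ x, 0 < u x := fun x => (div_pos hC1 (by positivity)).trans_le (hlow x)
  have hC₂ : 0 < C₂ := (div_pos_iff_of_pos_right (by positivity)).1 ((hu0 0).trans_le (hupp 0))
  have huC₂ : ∀ x, u x ≤ C₂ := fun x =>
    (hupp x).trans (div_le_self hC₂.le (le_add_of_nonneg_right (by positivity)))
  have hupp_pow : ∀ x, u x ^ (p - 1) ≤ C₂ ^ (p - 1) / (1 + ‖x‖ ^ r) := fun x =>
    rpow_le_div_one_add_of_le_div (hu0 x).le (by positivity) (by linarith) (hupp x)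
  have hu : Integrable u := integrable_of_le_div_one_add_norm_rpow hr hmeas.aestronglyMeasurable
    (fun x => (hu0 x).le) hupp
  have hupow : Integrable fun x => u x ^ (p - 1) := integrable_of_le_div_one_add_norm_rpow hr
    (hmeas.pow_const _).aestronglyMeasurable (fun x => rpow_nonneg (hu0 x).le _) hupp_pow
  set V := volume.real (ball (0 : EuclideanSpace ℝ (Fin N)) 1)
  have hV : 0 < V :=
    ENNReal.toReal_pos (measure_ball_pos volume _ one_pos).ne' measure_ball_lt_top.ne
  set I := ∫ x, u x
  have hI : 0 < I := (mul_pos (half_pos hC1) hV).trans_le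
    (half_mul_measureReal_ball_le_integral hr0 hC1.le hlow hu)
  set J := ∫ x, u x ^ (p - 1)
  have hJ : 0 ≤ J := integral_nonneg fun x => rpow_nonneg (hu0 x).le _
  refine ⟨(C₁ / 2) ^ (p - 1) * (C₁ / 2 ^ (r + 1)) * V, by positivity,
    2 ^ r * (C₂ * J + C₂ ^ (p - 1) * I), by positivity, fun y z hyz => ⟨?_, ?_⟩⟩
  · refine le_integral_rpow_comp_sub_mul_comp_sub hr0 (by linarith) hC1.le hlow ?_ hyz.le
    exact (hupow.comp_sub_right y).mul_bdd
      (hmeas.comp (measurable_sub_const z)).aestronglyMeasurable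
      (.of_forall fun x => by rw [norm_of_nonneg (hu0 _).le]; exact huC₂ _)
  · exact integral_comp_sub_mul_comp_sub_le hr0 hupow hu (fun x => rpow_nonneg (hu0 x).le _)
      (fun x => (hu0 x).le) hupp_pow hupp (by rintro rfl; norm_num at hyz)

theorem stmt3 (N : ℕ) (hN : 1 ≤ N) (s p C₁ C₂ : ℝ) (hs0 : 0 < s) (hs1 : s < 1)
    (hp : 2 < p) (hC1 : 0 < C₁) (hC12 : C₁ < C₂)
    (u : EuclideanSpace ℝ (Fin N) → ℝ) (hmeas : Measurable u)
    (hlow : ∀ x, C₁ / (1 + ‖x‖ ^ ((N : ℝ) + 2 * s)) ≤ u x)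
    (hupp : ∀ x, u x ≤ C₂ / (1 + ‖x‖ ^ ((N : ℝ) + 2 * s))) :
    ∃ ζ₁ > (0 : ℝ), ∃ ζ₂ > (0 : ℝ), ∀ y z : EuclideanSpace ℝ (Fin N), 1 < ‖z - y‖ →
      ζ₁ * ‖z - y‖ ^ (-((N : ℝ) + 2 * s)) ≤ (∫ x, u (x - y) ^ (p - 1) * u (x - z)) ∧
      (∫ x, u (x - y) ^ (p - 1) * u (x - z)) ≤ ζ₂ * ‖z - y‖ ^ (-((N : ℝ) + 2 * s)) :=
  stmt3_general N s p C₁ C₂ hs0 hp hC1 u hmeas hlow hupp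
end

section
/- Let g : cl(Ω_R) → ℝ^N be defined on the closed ball Ω_R = B_{(4/3)R}(y/3) ⊂ ℝ^N (with y = (0,…,0,R)) by g(x) = τ(x)·x/|x| for x ≠ 0 and g(0) = 0, where τ(x) = (1/(5R))[√(15|x|² + x_N²) − x_N]. Then g is a continuous map from cl(Ω_R) onto the closed unit ball of ℝ^N, g maps the boundary ∂Ω_R to the unit sphere, and g(z) = z/|z| for z ∈ ∂Ω_R. -/
/-!
Write `s = √(15|x|² + x_N²)`, so that `5Rτ(x) = s − x_N`. Squaring `s ≤ 5R + x_N` shows that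
`τ(x) ≤ 1` exactly when `15|x|² ≤ 25R² + 10R x_N`, the inequality describing `cl(Ω_R)`, and
`τ = 1` on `∂Ω_R`. Moreover `τ` is continuous, positively homogeneous and positive away from `0`,
and `|g(x)| = τ(x)`. Hence `g` is continuous at `0` because `τ(0) = 0`, and it maps `{τ ≤ 1}` onto
the closed unit ball, `v ≠ 0` being the image of `(|v|/τ(v))·v`.
-/

open Real Metric Set
open scoped Classical

/-- The radial scaling factor `τ(x) = (1/(5R))(√(15|x|² + x_N²) − x_N)`. -/
noncomputable def tau14 (N : ℕ) (R : ℝ) (x : EuclideanSpace ℝ (Fin (N + 1))) : ℝ :=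
  (1 / (5 * R)) * (Real.sqrt (15 * ‖x‖ ^ 2 + (x (Fin.last N)) ^ 2) - x (Fin.last N))

/-- The homothetic contraction `g(x) = τ(x)·x/|x|`, `g(0) = 0`. -/
noncomputable def g14 (N : ℕ) (R : ℝ) (x : EuclideanSpace ℝ (Fin (N + 1))) :
    EuclideanSpace ℝ (Fin (N + 1)) :=
  if x = 0 then 0 else (tau14 N R x / ‖x‖) • x

section RadialRescale

variable {E : Type*} [NormedAddCommGroup E] [NormedSpace ℝ E]

noncomputable def radialRescale (τ : E → ℝ) (x : E) : E :=
  if x = 0 then 0 else (τ x / ‖x‖) • x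

variable {τ : E → ℝ}

@[simp]
lemma radialRescale_zero (τ : E → ℝ) : radialRescale τ 0 = 0 := if_pos rfl

lemma radialRescale_of_ne_zero {x : E} (hx : x ≠ 0) : radialRescale τ x = (τ x / ‖x‖) • x :=
  if_neg hx

lemma norm_radialRescale_of_ne_zero {x : E} (hx : x ≠ 0) :
    ‖radialRescale τ x‖ = |τ x| := by
  rw [radialRescale_of_ne_zero hx, norm_smul, norm_div, Real.norm_eq_abs, norm_norm,
    div_mul_cancel₀ _ (norm_ne_zero_iff.2 hx)]

lemma norm_radialRescale_le (x : E) : ‖radialRescale τ x‖ ≤ |τ x| := by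
  rcases eq_or_ne x 0 with rfl | hx
  · simp
  · exact (norm_radialRescale_of_ne_zero hx).le

lemma continuous_radialRescale (hτ : Continuous τ) (hτ₀ : τ 0 = 0) :
    Continuous (radialRescale τ) := by
  refine continuous_iff_continuousAt.2 fun x ↦ ?_
  rcases eq_or_ne x 0 with rfl | hx
  · have hlim : Filter.Tendsto (fun y ↦ |τ y|) (nhds 0) (nhds 0) := by
      simpa [hτ₀] using (hτ.tendsto 0).abs
    simpa [ContinuousAt] using squeeze_zero_norm norm_radialRescale_le hlim
  · have hsmul : ContinuousAt (fun y ↦ (τ y / ‖y‖) • y) x :=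
      (hτ.continuousAt.div continuous_norm.continuousAt (norm_ne_zero_iff.2 hx)).smul
        continuousAt_id
    refine hsmul.congr ?_
    filter_upwards [isOpen_compl_singleton.mem_nhds hx] with y hy
    exact (radialRescale_of_ne_zero hy).symm

lemma radialRescale_of_eq_one {x : E} (hx : τ x = 1) : radialRescale τ x = ‖x‖⁻¹ • x := by
  rcases eq_or_ne x 0 with rfl | hx₀
  · simp
  · rw [radialRescale_of_ne_zero hx₀, hx, one_div]

lemma image_radialRescale_setOf_le_one (hhom : ∀ c : ℝ, 0 ≤ c → ∀ x, τ (c • x) = c * τ x)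
    (hpos : ∀ x, x ≠ 0 → 0 < τ x) :
    radialRescale τ '' {x | τ x ≤ 1} = closedBall 0 1 := by
  have hτ₀ : τ 0 = 0 := by simpa using hhom 0 le_rfl 0
  ext v
  simp only [Set.mem_image, Set.mem_ofPred_eq, mem_closedBall_zero_iff]
  constructor
  · rintro ⟨x, hx, rfl⟩
    rcases eq_or_ne x 0 with rfl | hx₀
    · simp
    · rw [norm_radialRescale_of_ne_zero hx₀, abs_of_pos (hpos x hx₀)]
      exact hx
  · intro hv
    rcases eq_or_ne v 0 with rfl | hv₀
    · exact ⟨0, by simp [hτ₀], radialRescale_zero τ⟩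
    have hc : 0 < ‖v‖ / τ v := div_pos (norm_pos_iff.2 hv₀) (hpos v hv₀)
    have hτv : τ ((‖v‖ / τ v) • v) = ‖v‖ := by
      rw [hhom _ hc.le, div_mul_cancel₀ _ (hpos v hv₀).ne']
    refine ⟨(‖v‖ / τ v) • v, hτv.le.trans hv, ?_⟩
    rw [radialRescale_of_ne_zero (smul_ne_zero hc.ne' hv₀), hτv, norm_smul,
      Real.norm_of_nonneg hc.le, smul_smul, div_mul_cancel_right₀ (norm_ne_zero_iff.2 hv₀),
      inv_mul_cancel₀ hc.ne', one_smul]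

end RadialRescale

section Scalar

variable {a t R : ℝ}

lemma sqrt_fifteen_sq_add_sq_smul {c : ℝ} (hc : 0 ≤ c) :
    √(15 * (c * a) ^ 2 + (c * t) ^ 2) = c * √(15 * a ^ 2 + t ^ 2) := by
  rw [show 15 * (c * a) ^ 2 + (c * t) ^ 2 = c ^ 2 * (15 * a ^ 2 + t ^ 2) by ring,
    Real.sqrt_mul (sq_nonneg c), Real.sqrt_sq hc]

lemma lt_sqrt_fifteen_sq_add_sq (ha : a ≠ 0) : t < √(15 * a ^ 2 + t ^ 2) :=
  Real.lt_sqrt_of_sq_lt (lt_add_of_pos_left _ (by positivity))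

lemma sqrt_fifteen_sq_add_sq_sub_le_iff (hR : 0 < R) :
    √(15 * a ^ 2 + t ^ 2) - t ≤ 5 * R ↔ 15 * a ^ 2 ≤ 25 * R ^ 2 + 10 * R * t := by
  rw [sub_le_iff_le_add', Real.sqrt_le_iff]
  constructor
  · rintro ⟨-, h⟩
    nlinarith
  · intro h
    -- `25R² + 10Rt ≥ 15a² ≥ 0` forces `t ≥ -5R/2`
    exact ⟨by nlinarith [sq_nonneg a], by nlinarith⟩

lemma sqrt_fifteen_sq_add_sq_sub_eq (hR : 0 < R) (h : 15 * a ^ 2 = 25 * R ^ 2 + 10 * R * t) :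
    √(15 * a ^ 2 + t ^ 2) - t = 5 * R := by
  rw [sub_eq_iff_eq_add, Real.sqrt_eq_iff_eq_sq (by positivity) (by nlinarith [sq_nonneg a])]
  linear_combination h

end Scalar

lemma EuclideanSpace.norm_sub_smul_single_sq {ι : Type*} [Fintype ι] [DecidableEq ι]
    (x : EuclideanSpace ℝ ι) (i : ι) (c : ℝ) :
    ‖x - c • EuclideanSpace.single i 1‖ ^ 2 = ‖x‖ ^ 2 - 2 * c * x i + c ^ 2 := by
  rw [norm_sub_sq_real, real_inner_smul_right, EuclideanSpace.inner_single_right, norm_smul,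
    PiLp.norm_single]
  simp only [RCLike.conj_to_real, one_mul, Real.norm_eq_abs, norm_one, mul_one, sq_abs]
  ring

section Tau

variable {N : ℕ} {R : ℝ}

lemma tau14_eq_div (x : EuclideanSpace ℝ (Fin (N + 1))) :
    tau14 N R x = (√(15 * ‖x‖ ^ 2 + x (Fin.last N) ^ 2) - x (Fin.last N)) / (5 * R) :=
  one_div_mul_eq_div _ _

lemma tau14_zero : tau14 N R 0 = 0 := by
  simp [tau14]

lemma continuous_tau14 : Continuous (tau14 N R) := by
  have hlast : Continuous fun x : EuclideanSpace ℝ (Fin (N + 1)) ↦ x (Fin.last N) :=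
    (EuclideanSpace.proj (Fin.last N)).continuous
  unfold tau14
  fun_prop

lemma tau14_smul {c : ℝ} (hc : 0 ≤ c) (x : EuclideanSpace ℝ (Fin (N + 1))) :
    tau14 N R (c • x) = c * tau14 N R x := by
  simp only [tau14, norm_smul, Real.norm_of_nonneg hc, PiLp.smul_apply, smul_eq_mul,
    sqrt_fifteen_sq_add_sq_smul hc]
  ring

lemma tau14_pos (hR : 0 < R) {x : EuclideanSpace ℝ (Fin (N + 1))} (hx : x ≠ 0) :
    0 < tau14 N R x := by
  rw [tau14_eq_div]
  have := lt_sqrt_fifteen_sq_add_sq (t := x (Fin.last N)) (norm_ne_zero_iff.2 hx)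
  exact div_pos (by linarith) (by positivity)

lemma tau14_le_one_iff (hR : 0 < R) (x : EuclideanSpace ℝ (Fin (N + 1))) :
    tau14 N R x ≤ 1 ↔ 15 * ‖x‖ ^ 2 ≤ 25 * R ^ 2 + 10 * R * x (Fin.last N) := by
  rw [tau14_eq_div, div_le_one (by positivity)]
  exact sqrt_fifteen_sq_add_sq_sub_le_iff hR

lemma tau14_eq_one (hR : 0 < R) {x : EuclideanSpace ℝ (Fin (N + 1))}
    (h : 15 * ‖x‖ ^ 2 = 25 * R ^ 2 + 10 * R * x (Fin.last N)) : tau14 N R x = 1 := by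
  rw [tau14_eq_div, sqrt_fifteen_sq_add_sq_sub_eq hR h]
  exact div_self (by positivity)

lemma mem_closedBall_iff_fifteen_sq_le (hR : 0 < R) (x : EuclideanSpace ℝ (Fin (N + 1))) :
    x ∈ closedBall ((R / 3) • EuclideanSpace.single (Fin.last N) (1 : ℝ)) ((4 / 3) * R) ↔
      15 * ‖x‖ ^ 2 ≤ 25 * R ^ 2 + 10 * R * x (Fin.last N) := by
  rw [mem_closedBall, ← sq_le_sq₀ dist_nonneg (by positivity), dist_eq_norm,
    EuclideanSpace.norm_sub_smul_single_sq]
  constructor <;> intro h <;> linarith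

lemma fifteen_sq_eq_of_mem_sphere (hR : 0 < R) {x : EuclideanSpace ℝ (Fin (N + 1))}
    (hx : x ∈ sphere ((R / 3) • EuclideanSpace.single (Fin.last N) (1 : ℝ)) ((4 / 3) * R)) :
    15 * ‖x‖ ^ 2 = 25 * R ^ 2 + 10 * R * x (Fin.last N) := by
  rw [mem_sphere, ← sq_eq_sq₀ dist_nonneg (by positivity), dist_eq_norm,
    EuclideanSpace.norm_sub_smul_single_sq] at hx
  linarith

lemma closedBall_eq_setOf_tau14_le_one (hR : 0 < R) :
    closedBall ((R / 3) • EuclideanSpace.single (Fin.last N) (1 : ℝ)) ((4 / 3) * R) =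
      {x | tau14 N R x ≤ 1} := by
  ext x
  rw [mem_closedBall_iff_fifteen_sq_le hR, Set.mem_ofPred_eq, tau14_le_one_iff hR]

lemma g14_eq_radialRescale : g14 N R = radialRescale (tau14 N R) := by
  funext x
  unfold g14 radialRescale
  congr

end Tau

theorem stmt14 (N : ℕ) (R : ℝ) (hR : 0 < R) :
    ContinuousOn (g14 N R)
      (closedBall ((R / 3) • EuclideanSpace.single (Fin.last N) (1 : ℝ)) ((4 / 3) * R)) ∧
    g14 N R '' (closedBall ((R / 3) • EuclideanSpace.single (Fin.last N) (1 : ℝ)) ((4 / 3) * R))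
      = closedBall (0 : EuclideanSpace ℝ (Fin (N + 1))) 1 ∧
    ∀ z ∈ sphere ((R / 3) • EuclideanSpace.single (Fin.last N) (1 : ℝ)) ((4 / 3) * R),
      g14 N R z = ‖z‖⁻¹ • z ∧ ‖g14 N R z‖ = 1 := by
  rw [g14_eq_radialRescale, closedBall_eq_setOf_tau14_le_one hR]
  refine ⟨(continuous_radialRescale continuous_tau14 tau14_zero).continuousOn,
    image_radialRescale_setOf_le_one (fun c hc x ↦ tau14_smul hc x) (fun x hx ↦ tau14_pos hR hx),
    fun z hz ↦ ?_⟩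
  have hτz : tau14 N R z = 1 := tau14_eq_one hR (fifteen_sq_eq_of_mem_sphere hR hz)
  have hz₀ : z ≠ 0 := by rintro rfl; simp [tau14_zero] at hτz
  exact ⟨radialRescale_of_eq_one hτz, by rw [norm_radialRescale_of_ne_zero hz₀, hτz, abs_one]⟩
end

section
/- Let u_∞ ∈ L^p(ℝ^N), u_∞ ≠ 0, p ≥ 1, and let (x_n) ⊂ ℝ^N with |x_n| → ∞. Then the barycenters of the translates satisfy |β(x_n ∗ u_∞)| → 1 as n → ∞, where (x_n ∗ u_∞)(x) = u_∞(x − x_n) and β(u) = (1/‖u‖_{L^p}^p) ∫ (x/|x|)|u(x)|^p dx. -/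
/-! Translating by `x n` turns `β(x n ∗ u)` into `‖u‖ₚ⁻ᵖ ∫ |u y|ᵖ (y + x n)/|y + x n| dy`.
For fixed `y` the unit vector `(y + x n)/|y + x n|` differs from `(x n)/|x n|` by at most
`2|y|/|y + x n| → 0`, so by dominated convergence the integral is `‖u‖ₚᵖ (x n)/|x n| + o(1)`,
a vector of norm `‖u‖ₚᵖ + o(1)`. -/

open Real MeasureTheory Filter Topology NormedSpace

section Normalize

variable {E : Type*} [NormedAddCommGroup E] [NormedSpace ℝ E]

lemma norm_normalize_le (a : E) : ‖normalize a‖ ≤ 1 := by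
  rcases eq_or_ne a 0 with rfl | ha
  · simp
  · exact (norm_normalize ha).le

lemma norm_normalize_sub_normalize_le_two (a b : E) : ‖normalize a - normalize b‖ ≤ 2 :=
  calc ‖normalize a - normalize b‖ ≤ ‖normalize a‖ + ‖normalize b‖ := norm_sub_le _ _
    _ ≤ 1 + 1 := add_le_add (norm_normalize_le a) (norm_normalize_le b)
    _ = 2 := one_add_one_eq_two

lemma norm_normalize_sub_normalize_le {a : E} (ha : a ≠ 0) (b : E) :
    ‖normalize a - normalize b‖ ≤ 2 * ‖a - b‖ / ‖a‖ := by
  have hna : 0 < ‖a‖ := norm_pos_iff.mpr ha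
  have hsplit : normalize a - normalize b = ‖a‖⁻¹ • (a - b) + (‖a‖⁻¹ - ‖b‖⁻¹) • b := by
    simp only [NormedSpace.normalize, smul_sub, sub_smul]; abel
  have hfirst : ‖‖a‖⁻¹ • (a - b)‖ = ‖a - b‖ / ‖a‖ := by
    rw [norm_smul, norm_inv, norm_norm, div_eq_inv_mul]
  have hsecond : ‖(‖a‖⁻¹ - ‖b‖⁻¹) • b‖ ≤ ‖a - b‖ / ‖a‖ := by
    rcases eq_or_ne b 0 with rfl | hb
    · simp only [smul_zero, norm_zero]; positivity
    have hnb : 0 < ‖b‖ := norm_pos_iff.mpr hb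
    calc ‖(‖a‖⁻¹ - ‖b‖⁻¹) • b‖ = |‖a‖ - ‖b‖| / ‖a‖ := by
          rw [norm_smul, Real.norm_eq_abs, inv_sub_inv hna.ne' hnb.ne', abs_div,
            abs_of_pos (mul_pos hna hnb), abs_sub_comm]
          field_simp
      _ ≤ ‖a - b‖ / ‖a‖ := by gcongr; exact abs_norm_sub_norm_le a b
  calc ‖normalize a - normalize b‖
      ≤ ‖‖a‖⁻¹ • (a - b)‖ + ‖(‖a‖⁻¹ - ‖b‖⁻¹) • b‖ := hsplit ▸ norm_add_le _ _
    _ ≤ ‖a - b‖ / ‖a‖ + ‖a - b‖ / ‖a‖ := by rw [hfirst]; gcongr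
    _ = 2 * ‖a - b‖ / ‖a‖ := by ring

lemma measurable_normalize [MeasurableSpace E] [BorelSpace E] :
    Measurable (normalize : E → E) :=
  measurable_norm.inv.smul measurable_id

lemma tendsto_normalize_add_sub_normalize {x : ℕ → E}
    (hx : Tendsto (fun n => ‖x n‖) atTop atTop) (y : E) :
    Tendsto (fun n => normalize (y + x n) - normalize (x n)) atTop (𝓝 0) := by
  have hyx : Tendsto (fun n => ‖y + x n‖) atTop atTop := by
    refine tendsto_atTop_mono (fun n => ?_) (tendsto_atTop_add_const_right _ (-‖y‖) hx)
    have := norm_sub_le (y + x n) y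
    rw [add_sub_cancel_left] at this
    linarith
  refine squeeze_zero_norm' ?_ ((tendsto_const_nhds (x := 2 * ‖y‖)).div_atTop hyx)
  filter_upwards [hyx.eventually_gt_atTop 0] with n hn
  simpa using norm_normalize_sub_normalize_le (norm_pos_iff.mp hn) (x n)

end Normalize

section Barycenter

variable {E : Type*} [NormedAddCommGroup E] [NormedSpace ℝ E]
  [MeasurableSpace E] [BorelSpace E] [SecondCountableTopology E] {μ : Measure E}
  {f : E → ℝ} {x : ℕ → E}

lemma MeasureTheory.Integrable.smul_normalize_comp (hf : Integrable f μ) {g : E → E}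
    (hg : Measurable g) :
    Integrable (fun y => f y • normalize (g y)) μ :=
  hf.norm.mono' (hf.1.smul (measurable_normalize.comp hg).aestronglyMeasurable)
    (Eventually.of_forall fun y => by
      rw [norm_smul]; exact mul_le_of_le_one_right (norm_nonneg _) (norm_normalize_le _))

lemma tendsto_integral_smul_normalize_add_sub [CompleteSpace E] (hf : Integrable f μ)
    (hx : Tendsto (fun n => ‖x n‖) atTop atTop) :
    Tendsto (fun n => (∫ y, f y • normalize (y + x n) ∂μ) - (∫ y, f y ∂μ) • normalize (x n))
      atTop (𝓝 0) := by
  have hdiff : ∀ n, (∫ y, f y • normalize (y + x n) ∂μ) - (∫ y, f y ∂μ) • normalize (x n) =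
      ∫ y, f y • (normalize (y + x n) - normalize (x n)) ∂μ := by
    intro n
    simp only [smul_sub]
    rw [integral_sub (hf.smul_normalize_comp (measurable_add_const (x n)))
      (hf.smul_const _), integral_smul_const]
  simp only [hdiff]
  rw [← integral_zero E E]
  refine tendsto_integral_of_dominated_convergence (fun y => 2 * ‖f y‖)
    (fun n => ?_) (hf.norm.const_mul 2) (fun n => ?_) ?_
  · exact hf.1.smul (((measurable_normalize.comp (measurable_add_const (x n))).sub
      measurable_const).aestronglyMeasurable)
  · refine Eventually.of_forall fun y => ?_
    rw [norm_smul, mul_comm]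
    exact mul_le_mul_of_nonneg_right (norm_normalize_sub_normalize_le_two _ _) (norm_nonneg _)
  · refine Eventually.of_forall fun y => ?_
    simpa using (tendsto_normalize_add_sub_normalize hx y).const_smul (f y)

lemma tendsto_norm_integral_smul_normalize_add [CompleteSpace E] (hf : Integrable f μ)
    (hx : Tendsto (fun n => ‖x n‖) atTop atTop) :
    Tendsto (fun n => ‖∫ y, f y • normalize (y + x n) ∂μ‖) atTop (𝓝 |∫ y, f y ∂μ|) := by
  set A := fun n => ∫ y, f y • normalize (y + x n) ∂μ
  set B := fun n => (∫ y, f y ∂μ) • normalize (x n)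
  have hB : Tendsto (fun n => ‖B n‖) atTop (𝓝 |∫ y, f y ∂μ|) := by
    refine tendsto_const_nhds.congr' ?_
    filter_upwards [hx.eventually_gt_atTop 0] with n hn
    rw [norm_smul, norm_normalize (norm_pos_iff.mp hn), mul_one, Real.norm_eq_abs]
  have hAB : Tendsto (fun n => ‖A n‖ - ‖B n‖) atTop (𝓝 0) :=
    squeeze_zero_norm (fun n => abs_norm_sub_norm_le (A n) (B n))
      (by simpa using (tendsto_integral_smul_normalize_add_sub hf hx).norm)
  simpa using hAB.add hB

theorem tendsto_norm_barycenter_translate [CompleteSpace E] [μ.IsAddRightInvariant]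
    (hf : Integrable f μ) (hf0 : ∫ y, f y ∂μ ≠ 0) (hx : Tendsto (fun n => ‖x n‖) atTop atTop) :
    Tendsto (fun n => ‖(∫ z, f (z - x n) ∂μ)⁻¹ • ∫ z, f (z - x n) • (‖z‖⁻¹ • z) ∂μ‖)
      atTop (𝓝 1) := by
  have hshift : ∀ n, ∫ z, f (z - x n) • (‖z‖⁻¹ • z) ∂μ = ∫ y, f y • normalize (y + x n) ∂μ :=
    fun n => by
      rw [← integral_add_right_eq_self (μ := μ) _ (x n)]
      simp only [add_sub_cancel_right, NormedSpace.normalize]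
  simp only [integral_sub_right_eq_self, hshift, norm_smul, norm_inv, Real.norm_eq_abs]
  simpa [inv_mul_cancel₀ (abs_ne_zero.mpr hf0)] using
    (tendsto_norm_integral_smul_normalize_add hf hx).const_mul |∫ y, f y ∂μ|⁻¹

end Barycenter

lemma integral_abs_rpow_ne_zero {α : Type*} [MeasurableSpace α] {μ : Measure α} {u : α → ℝ}
    {p : ℝ} (hp : 0 < p) (hint : Integrable (fun z => |u z| ^ p) μ) (hu0 : ¬ u =ᵐ[μ] 0) :
    ∫ z, |u z| ^ p ∂μ ≠ 0 := by
  intro h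
  rw [integral_eq_zero_iff_of_nonneg (fun z => by positivity) hint] at h
  refine hu0 (h.mono fun z hz => ?_)
  simpa [rpow_eq_zero_iff_of_nonneg, hp.ne'] using hz

theorem stmt16_general (N : ℕ) (p : ℝ) (hp : 1 ≤ p)
    (u : EuclideanSpace ℝ (Fin N) → ℝ)
    (hu : MemLp u (ENNReal.ofReal p) volume)
    (hu0 : ¬ u =ᵐ[volume] 0)
    (x : ℕ → EuclideanSpace ℝ (Fin N))
    (hx : Tendsto (fun n => ‖x n‖) atTop atTop) :
    Tendsto (fun n =>
        ‖(∫ z, |u (z - x n)| ^ p)⁻¹ •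
            ∫ z : EuclideanSpace ℝ (Fin N), (|u (z - x n)| ^ p) • (‖z‖⁻¹ • z)‖)
      atTop (nhds 1) := by
  have hp0 : 0 < p := by linarith
  have hint : Integrable (fun z => |u z| ^ p) volume := by
    simpa [ENNReal.toReal_ofReal hp0.le] using
      hu.integrable_norm_rpow (by simpa using hp0) ENNReal.ofReal_ne_top
  exact tendsto_norm_barycenter_translate hint (integral_abs_rpow_ne_zero hp0 hint hu0) hx

theorem stmt16 (N : ℕ) (hN : 1 ≤ N) (p : ℝ) (hp : 1 ≤ p)
    (u : EuclideanSpace ℝ (Fin N) → ℝ)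
    (hu : MemLp u (ENNReal.ofReal p) volume)
    (hu0 : ¬ u =ᵐ[volume] 0)
    (x : ℕ → EuclideanSpace ℝ (Fin N))
    (hx : Tendsto (fun n => ‖x n‖) atTop atTop) :
    Tendsto (fun n =>
        ‖(∫ z, |u (z - x n)| ^ p)⁻¹ •
            ∫ z : EuclideanSpace ℝ (Fin N), (|u (z - x n)| ^ p) • (‖z‖⁻¹ • z)‖)
      atTop (nhds 1) :=
  stmt16_general N p hp u hu hu0 x hx
end

section
/- Let p > 2 and δ₀ ∈ (0, ½). Then there exists ε > 0 such that for all λ ∈ [δ₀, 1 − δ₀] and all t > 0 with |t^{2−p} − ((1−λ)^p + λ^p)/((1−λ)² + λ²)| ≤ ε: (1−λ)^{p−2} + λ^{p−2} − t^{2−p} ≥ δ₀^p. -/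
/-!
Writing `x ^ p = x ^ (p - 2) * x ^ 2`, the gap `(1-λ)^(p-2) + λ^(p-2) - ((1-λ)^p + λ^p)/((1-λ)² + λ²)`
equals `((1-λ)^(p-2) λ² + λ^(p-2) (1-λ)²) / ((1-λ)² + λ²)`. The denominator is at most
`((1-λ) + λ)² = 1` and each term of the numerator is at least `δ₀^(p-2) δ₀² = δ₀^p`, so the gap is
at least `2 δ₀^p`, and `ε = δ₀^p` works.
-/

open Real Set

lemma rpow_eq_rpow_sub_two_mul_sq {x : ℝ} (hx : 0 < x) (p : ℝ) : x ^ p = x ^ (p - 2) * x ^ 2 := by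
  rw [← rpow_natCast, ← rpow_add hx]
  norm_num

lemma rpow_le_rpow_sub_two_mul_sq {p δ a b : ℝ} (hp : 2 ≤ p) (hδ : 0 < δ) (ha : δ ≤ a)
    (hb : δ ≤ b) : δ ^ p ≤ a ^ (p - 2) * b ^ 2 := by
  rw [rpow_eq_rpow_sub_two_mul_sq hδ]
  have hp2 : 0 ≤ p - 2 := by linarith
  gcongr
  exact rpow_nonneg (hδ.le.trans ha) _

lemma mul_sq_add_mul_sq_le_add_sub_div {A B a b : ℝ} (hA : 0 ≤ A) (hB : 0 ≤ B) (ha : 0 ≤ a)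
    (hb : 0 ≤ b) (hab : a + b = 1) :
    A * b ^ 2 + B * a ^ 2 ≤ A + B - (A * a ^ 2 + B * b ^ 2) / (a ^ 2 + b ^ 2) := by
  have hD : 0 < a ^ 2 + b ^ 2 := by
    rcases eq_or_lt_of_le ha with rfl | ha'
    · simp_all
    · positivity
  have hD₁ : a ^ 2 + b ^ 2 ≤ 1 := by nlinarith
  have hgap : A + B - (A * a ^ 2 + B * b ^ 2) / (a ^ 2 + b ^ 2)
      = (A * b ^ 2 + B * a ^ 2) / (a ^ 2 + b ^ 2) := by
    field_simp
    ring
  rw [hgap]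
  exact le_div_self (by positivity) hD hD₁

theorem stmt19_general (p : ℝ) (hp : 2 < p) (δ₀ : ℝ) (hδ0 : 0 < δ₀) :
    ∃ ε > (0 : ℝ), ∀ l ∈ Icc δ₀ (1 - δ₀), ∀ t : ℝ, 0 < t →
      |t ^ (2 - p) - ((1 - l) ^ p + l ^ p) / ((1 - l) ^ 2 + l ^ 2)| ≤ ε →
      δ₀ ^ p ≤ (1 - l) ^ (p - 2) + l ^ (p - 2) - t ^ (2 - p) := by
  refine ⟨δ₀ ^ p, by positivity, ?_⟩
  rintro l ⟨hl, hl'⟩ t - ht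
  have h1l : δ₀ ≤ 1 - l := by linarith
  have hgap : 2 * δ₀ ^ p ≤
      (1 - l) ^ (p - 2) + l ^ (p - 2) - ((1 - l) ^ p + l ^ p) / ((1 - l) ^ 2 + l ^ 2) := by
    rw [rpow_eq_rpow_sub_two_mul_sq (hδ0.trans_le h1l) p,
      rpow_eq_rpow_sub_two_mul_sq (hδ0.trans_le hl) p]
    calc 2 * δ₀ ^ p ≤ (1 - l) ^ (p - 2) * l ^ 2 + l ^ (p - 2) * (1 - l) ^ 2 := by
          linarith [rpow_le_rpow_sub_two_mul_sq hp.le hδ0 h1l hl,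
            rpow_le_rpow_sub_two_mul_sq hp.le hδ0 hl h1l]
      _ ≤ _ := mul_sq_add_mul_sq_le_add_sub_div (rpow_nonneg (by linarith) _)
          (rpow_nonneg (by linarith) _) (by linarith) (by linarith) (by ring)
  linarith [(abs_le.mp ht).2]

theorem stmt19 (p : ℝ) (hp : 2 < p) (δ₀ : ℝ) (hδ0 : 0 < δ₀) (hδhalf : δ₀ < 1 / 2) :
    ∃ ε > (0 : ℝ), ∀ l ∈ Icc δ₀ (1 - δ₀), ∀ t : ℝ, 0 < t →
      |t ^ (2 - p) - ((1 - l) ^ p + l ^ p) / ((1 - l) ^ 2 + l ^ 2)| ≤ ε →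
      δ₀ ^ p ≤ (1 - l) ^ (p - 2) + l ^ (p - 2) - t ^ (2 - p) :=
  stmt19_general p hp δ₀ hδ0
end
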